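/- arXiv:1402.1506 — 3 statements merged into one kernel-verified Lean document; each statement's English description precedes it below -/
import Mathlib

section
/- Let 𝒫 be a number system partition for (M,φ) whose language ℒ fulfills the specification property, and let k ∈ ℕ. Then for every q ∈ S_k there exists an infinite word ω ∈ X such that lim_{n→∞} P_k(ω,n) = q in (Δ_k, ‖·‖_1). -/
open Filter Topology Set

namespace Paper

/-- The ℓ¹ distance between two finitely-indexed real vectors. -/
noncomputable def dist1 {α : Type*} [Fintype α] (p q : α → ℝ) : ℝ :=
  ∑ b, |p b - q b|

/-- The simplex of probability vectors indexed by `α`. -/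
def Simplex (α : Type*) [Fintype α] : Set (α → ℝ) :=
  {p | (∀ b, 0 ≤ p b) ∧ ∑ b, p b = 1}

/-- The set of accumulation points, in the simplex with the ℓ¹ norm, of a sequence
of vectors. -/
def AccPts {α : Type*} [Fintype α] (f : ℕ → (α → ℝ)) : Set (α → ℝ) :=
  {p | p ∈ Simplex α ∧ ∀ ε : ℝ, 0 < ε → ∀ n₀ : ℕ, ∃ n, n₀ ≤ n ∧ dist1 (f n) p < ε}

/-- `freq ω b n` is the frequency of the block `b` among the first `n` letters of
the infinite word `ω`. -/
noncomputable def freq {N : ℕ} (ω : ℕ → Fin N) (b : List (Fin N)) (n : ℕ) : ℝ :=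
  (((Finset.range n).filter fun i =>
      (List.ofFn fun m : Fin b.length => ω (i + (m : ℕ))) = b).card : ℝ) / n

/-- The vector of frequencies of all blocks of length `k` among the first `n`
letters of the infinite word `ω`. -/
noncomputable def freqVec {N : ℕ} (k : ℕ) (ω : ℕ → Fin N) (n : ℕ) :
    (Fin k → Fin N) → ℝ :=
  fun b => freq ω (List.ofFn b) n

/-- `wordFreqAt w b n` is the frequency of the block `b` among the first `n`
positions of the finite word `w`. -/
noncomputable def wordFreqAt {N : ℕ} (w b : List (Fin N)) (n : ℕ) : ℝ :=
  (((Finset.range n).filter fun i => (w.drop i).take b.length = b).card : ℝ) / n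

/-- The frequency of the block `b` among all positions of the finite word `w`. -/
noncomputable def wordFreq {N : ℕ} (w b : List (Fin N)) : ℝ :=
  wordFreqAt w b w.length

/-- The vector of frequencies of all blocks of length `k` in the finite word `w`. -/
noncomputable def wordFreqVec {N : ℕ} (k : ℕ) (w : List (Fin N)) :
    (Fin k → Fin N) → ℝ :=
  fun b => wordFreq w (List.ofFn b)

/-- The vector of frequencies of all blocks of length `k` among the first `n`
positions of the finite word `w`. -/
noncomputable def wordFreqVecAt {N : ℕ} (k : ℕ) (w : List (Fin N)) (n : ℕ) :
    (Fin k → Fin N) → ℝ :=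
  fun b => wordFreqAt w (List.ofFn b) n

/-- The iterated Cesàro averages of the block frequencies:
`cfreq 0 ω b n = freq ω b n` and `cfreq (r+1) ω b n = (∑_{j=1}^n cfreq r ω b j)/n`. -/
noncomputable def cfreq {N : ℕ} : ℕ → (ℕ → Fin N) → List (Fin N) → ℕ → ℝ
  | 0, ω, b, n => freq ω b n
  | r + 1, ω, b, n => (∑ j ∈ Finset.Icc 1 n, cfreq r ω b j) / n

/-- The vector of `r`-th iterated Cesàro averages of the frequencies of blocks of
length `k`. -/
noncomputable def cfreqVec {N : ℕ} (r k : ℕ) (ω : ℕ → Fin N) (n : ℕ) :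
    (Fin k → Fin N) → ℝ :=
  fun b => cfreq r ω (List.ofFn b) n

/-- The tower functions: `tow 1 x = 2^x`, `tow m x = 2^(tow (m-1) x)`. -/
def tow (m x : ℕ) : ℕ := (fun y => 2 ^ y)^[m] x

section Dyn

variable {N : ℕ} {M : Type*} [MetricSpace M] [CompactSpace M]

/-- A word `w` is allowed for `(𝒫, φ)` if `⋂_{k=1}^{|w|} φ^{-k}(P_{w_k}) ≠ ∅`. -/
def Allowed (φ : M → M) (P : Fin N → Set M) (w : List (Fin N)) : Prop :=
  (⋂ m : Fin w.length, (φ^[(m : ℕ) + 1]) ⁻¹' P (w.get m)).Nonempty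

/-- The language of `(𝒫, φ)`: the set of allowed words. -/
def Lang (φ : M → M) (P : Fin N → Set M) : Set (List (Fin N)) :=
  {w | Allowed φ P w}

/-- The words of length `k` in the language of `(𝒫, φ)`. -/
def LangK (φ : M → M) (P : Fin N → Set M) (k : ℕ) : Set (List (Fin N)) :=
  {w | Allowed φ P w ∧ w.length = k}

/-- The one-sided shift space corresponding to `(𝒫, φ)`: the infinite words all of
whose finite prefixes are allowed. -/
def ShiftSpace (φ : M → M) (P : Fin N → Set M) : Set (ℕ → Fin N) :=
  {ω | ∀ n : ℕ, (List.ofFn fun m : Fin n => ω (m : ℕ)) ∈ Lang φ P}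

/-- The language fulfills the specification property with parameter `j`. -/
def Spec (φ : M → M) (P : Fin N → Set M) (j : ℕ) : Prop :=
  ∀ a ∈ Lang φ P, ∀ b ∈ Lang φ P,
    ∃ u ∈ Lang φ P, u.length ≤ j ∧ a ++ u ++ b ∈ Lang φ P

/-- The cylinder set `D_n(ω) = ⋂_{m=0}^n φ^{-m}(P_{ω_m})` in `M`. -/
def Dn (φ : M → M) (P : Fin N → Set M) (ω : ℕ → Fin N) (n : ℕ) : Set M :=
  ⋂ m : Fin (n + 1), (φ^[(m : ℕ)]) ⁻¹' P (ω (m : ℕ))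

/-- `𝒫` is a number system partition for `(M, φ)`: a topological partition
(pairwise disjoint open sets whose closures cover `M`) for a continuous `φ`, such
that `⋂_n cl(D_n(ω))` is a singleton for every `ω` in the shift space. -/
def IsNSP (φ : M → M) (P : Fin N → Set M) : Prop :=
  Continuous φ ∧ (∀ i, IsOpen (P i)) ∧ (Pairwise fun i j => Disjoint (P i) (P j)) ∧
    (⋃ i, closure (P i)) = Set.univ ∧
    ∀ ω ∈ ShiftSpace φ P, ∃ x : M, (⋂ n : ℕ, closure (Dn φ P ω n)) = {x}

/-- The set `U_∞ = ⋂_{k≥0} φ^{-k}(U)` where `U = ⋃ᵢ Pᵢ`. -/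
def Uinf (φ : M → M) (P : Fin N → Set M) : Set M :=
  ⋂ n : ℕ, (φ^[n]) ⁻¹' (⋃ i, P i)

/-- `S_k`, the union over all `ω` in the shift space of the sets of accumulation
points of the sequences of frequency vectors of blocks of length `k`. -/
def SK (φ : M → M) (P : Fin N → Set M) (k : ℕ) : Set ((Fin k → Fin N) → ℝ) :=
  ⋃ ω ∈ ShiftSpace φ P, AccPts (freqVec k ω)

/-- `𝔻 = ℚ^{ℒ_k} ∩ S_k`: the elements of `S_k` with rational coordinates. -/
def DD (φ : M → M) (P : Fin N → Set M) (k : ℕ) : Set ((Fin k → Fin N) → ℝ) :=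
  {p | p ∈ SK φ P k ∧ ∀ b, ∃ q : ℚ, p b = (q : ℝ)}

/-- Property `P` of a sequence of vectors. -/
def HasPropP (φ : M → M) (P : Fin N → Set M) {k : ℕ}
    (f : ℕ → ((Fin k → Fin N) → ℝ)) : Prop :=
  ∀ p ∈ DD φ P k, ∀ m : ℕ, 1 ≤ m → ∀ i : ℕ, ∀ ε : ℝ, 0 < ε →
    ∃ j : ℕ, i ≤ j ∧ (j : ℝ) / 2 ^ j < ε ∧
      ∀ n : ℕ, j < n → n < tow m (2 ^ j) → dist1 (f n) p < ε

/-- Property `P_{h,m,q,i}` of a sequence of vectors. -/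
def HasPropPh {α : Type*} [Fintype α] (h m i : ℕ) (q : α → ℝ)
    (f : ℕ → (α → ℝ)) : Prop :=
  ∀ ε : ℝ, 1 / (h : ℝ) < ε →
    ∃ j : ℕ, i ≤ j ∧ (j : ℝ) / 2 ^ j < ε ∧
      ∀ n : ℕ, j < n → n < tow m (2 ^ j) → dist1 (f n) q < ε

end Dyn

/-!
Choose prefixes of a word `ω₀ ∈ X` whose block-frequency vectors come closer and closer to `q`,
and concatenate them, joined by the connecting words of length at most `j` that the specification
property provides, into one infinite word of `X`. Block counts over consecutive intervals add up,
so the discrepancy `disc` of a word (the ℓ¹ distance between its block counts and `n • q`) is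
subadditive and at most `2n`. If the prefixes used grow so slowly that every piece is negligible
compared to the word before it, while the relative discrepancy of the pieces tends to `0`, then
the discrepancy of the first `n` letters is `o(n)`.
-/

lemma StrictMono.exists_le_lt_succ {t : ℕ → ℕ} (ht : StrictMono t) {I n : ℕ} (h : t I ≤ n) :
    ∃ i, I ≤ i ∧ t i ≤ n ∧ n < t (i + 1) := by
  have hI : I ≤ n := (ht.id_le I).trans h
  refine ⟨Nat.findGreatest (fun i => t i ≤ n) n, Nat.le_findGreatest hI h,
    Nat.findGreatest_spec (P := fun i => t i ≤ n) hI h, ?_⟩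
  by_contra! hle
  set g := Nat.findGreatest (fun i => t i ≤ n) n
  have hg : g + 1 ≤ n := (ht.id_le (g + 1)).trans hle
  exact Nat.findGreatest_is_greatest (Nat.lt_succ_self g) hg hle

open Finset in
lemma le_sum_of_subadditive {Δ : ℕ → ℕ → ℝ} (hzero : Δ 0 0 ≤ 0)
    (hadd : ∀ a m m', Δ a (m + m') ≤ Δ a m + Δ (a + m) m') (ℓ : ℕ → ℕ) (i : ℕ) :
    Δ 0 (∑ l ∈ range i, ℓ l) ≤ ∑ l ∈ range i, Δ (∑ l' ∈ range l, ℓ l') (ℓ l) := by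
  induction i with
  | zero => simpa using hzero
  | succ i ih =>
    rw [sum_range_succ, sum_range_succ]
    linarith [zero_add (∑ l ∈ range i, ℓ l) ▸ hadd 0 (∑ l ∈ range i, ℓ l) (ℓ i)]

open Finset Asymptotics in
theorem isLittleO_of_subadditive_pieces {Δ : ℕ → ℕ → ℝ} {C : ℝ}
    (hnonneg : ∀ a m, 0 ≤ Δ a m) (hle : ∀ a m, Δ a m ≤ C * m)
    (hadd : ∀ a m m', Δ a (m + m') ≤ Δ a m + Δ (a + m) m')
    {ℓ : ℕ → ℕ} (hℓ : ∀ i, 0 < ℓ i)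
    (hpiece : (fun i => Δ (∑ l ∈ range i, ℓ l) (ℓ i)) =o[atTop] fun i => (ℓ i : ℝ))
    (hsmall : (fun i => (ℓ i : ℝ)) =o[atTop] fun i => ((∑ l ∈ range i, ℓ l : ℕ) : ℝ)) :
    (fun n => Δ 0 n) =o[atTop] fun n => (n : ℝ) := by
  set t : ℕ → ℕ := fun i => ∑ l ∈ range i, ℓ l
  have ht : StrictMono t := strictMono_nat_of_lt_succ fun i => by simp [t, sum_range_succ, hℓ i]
  have hprefix : ∀ i, Δ 0 (t i) ≤ ∑ l ∈ range i, Δ (t l) (ℓ l) :=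
    le_sum_of_subadditive (by simpa using hle 0 0) hadd ℓ
  have hsum : (fun i => ∑ l ∈ range i, Δ (t l) (ℓ l)) =o[atTop] fun i => (t i : ℝ) := by
    simpa [t, Nat.cast_sum] using hpiece.sum_range (fun i => Nat.cast_nonneg _)
      (by simpa only [Function.comp_def, t, Nat.cast_sum] using
        (tendsto_natCast_atTop_atTop (R := ℝ)).comp ht.tendsto_atTop)
  have hend : (fun i => Δ 0 (t i) + C * ℓ i) =o[atTop] fun i => (t i : ℝ) :=
    ((isBigO_of_le _ fun i => by
      rw [Real.norm_of_nonneg (hnonneg _ _), Real.norm_of_nonneg (sum_nonneg fun _ _ => hnonneg _ _)]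
      exact hprefix i).trans_isLittleO hsum).add (hsmall.const_mul_left C)
  have hC : 0 ≤ C := by simpa using (hnonneg 0 1).trans (hle 0 1)
  refine isLittleO_iff.2 fun c hc => ?_
  obtain ⟨I, hI⟩ := eventually_atTop.1 (isLittleO_iff.1 hend hc)
  filter_upwards [eventually_ge_atTop (t I)] with n hn
  obtain ⟨i, hIi, hin, hni⟩ := StrictMono.exists_le_lt_succ ht hn
  have hlen : n - t i ≤ ℓ i := by
    have : t (i + 1) = t i + ℓ i := sum_range_succ _ _
    omega
  have hΔi := hI i hIi
  rw [Real.norm_of_nonneg (add_nonneg (hnonneg _ _) (mul_nonneg hC (Nat.cast_nonneg _))),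
    Real.norm_of_nonneg (Nat.cast_nonneg _)] at hΔi
  rw [Real.norm_of_nonneg (hnonneg _ _), Real.norm_of_nonneg (Nat.cast_nonneg _)]
  calc Δ 0 n = Δ 0 (t i + (n - t i)) := by rw [Nat.add_sub_cancel' hin]
    _ ≤ Δ 0 (t i) + Δ (t i) (n - t i) := by simpa using hadd 0 (t i) (n - t i)
    _ ≤ Δ 0 (t i) + C * ℓ i := by
        gcongr
        exact (hle _ _).trans (mul_le_mul_of_nonneg_left (by exact_mod_cast hlen) hC)
    _ ≤ c * t i := hΔi
    _ ≤ c * n := by gcongr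

open Asymptotics in
lemma isLittleO_of_norm_le_mul {α : Type*} {l : Filter α} {f g δ : α → ℝ}
    (hδ : Tendsto δ l (𝓝 0)) (h : ∀ᶠ x in l, ‖f x‖ ≤ δ x * ‖g x‖) : f =o[l] g := by
  refine (IsBigO.of_bound 1 ?_).trans_isLittleO
    ((((isLittleO_one_iff ℝ).2 hδ).mul_isBigO (isBigO_refl g l)).congr_right (by simp))
  filter_upwards [h] with x hx
  rw [one_mul, norm_mul]
  exact hx.trans (mul_le_mul_of_nonneg_right (Real.le_norm_self _) (norm_nonneg _))

lemma tendsto_findGreatest_atTop {p : ℕ → ℕ → Prop} [∀ s i, Decidable (p s i)]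
    (h : ∀ s, ∀ᶠ i in atTop, p s i) :
    Tendsto (fun i => Nat.findGreatest (p · i) i) atTop atTop := by
  refine tendsto_atTop.2 fun S => ?_
  filter_upwards [h S, eventually_ge_atTop S] with i hi hSi
  exact Nat.le_findGreatest hSi hi

section Discrepancy

open Finset

variable {N k : ℕ}

noncomputable def blockCount (k : ℕ) (ω : ℕ → Fin N) (n : ℕ) (b : Fin k → Fin N) : ℕ :=
  #{i ∈ range n | (fun m : Fin k => ω (i + m)) = b}

noncomputable def disc (k : ℕ) (q : (Fin k → Fin N) → ℝ) (ω : ℕ → Fin N) (n : ℕ) : ℝ :=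
  ∑ b, |(blockCount k ω n b : ℝ) - n * q b|

variable {q : (Fin k → Fin N) → ℝ}

lemma disc_nonneg (ω : ℕ → Fin N) (n : ℕ) : 0 ≤ disc k q ω n :=
  sum_nonneg fun _ _ => abs_nonneg _

lemma sum_blockCount (ω : ℕ → Fin N) (n : ℕ) : ∑ b, blockCount k ω n b = n :=
  (card_eq_sum_card_fiberwise fun _ _ => mem_univ _).symm.trans (card_range n)

lemma blockCount_add (ω : ℕ → Fin N) (n m : ℕ) (b : Fin k → Fin N) :
    blockCount k ω (n + m) b = blockCount k ω n b + blockCount k (fun x => ω (n + x)) m b := by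
  simp only [blockCount, card_filter, sum_range_add, add_assoc]

lemma blockCount_congr {ω ω' : ℕ → Fin N} {n : ℕ} (h : ∀ x < n + k, ω x = ω' x)
    (b : Fin k → Fin N) : blockCount k ω n b = blockCount k ω' n b := by
  unfold blockCount
  congr 1
  refine filter_congr fun i hi => ?_
  have hi : i < n := mem_range.1 hi
  rw [show (fun m : Fin k => ω (i + m)) = fun m : Fin k => ω' (i + m) from
    funext fun m => h _ (by omega)]

lemma disc_le (hq : q ∈ Simplex _) (ω : ℕ → Fin N) (n : ℕ) : disc k q ω n ≤ 2 * n := by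
  calc disc k q ω n ≤ ∑ b, ((blockCount k ω n b : ℝ) + n * q b) :=
        sum_le_sum fun b _ => (abs_sub _ _).trans (by
          rw [abs_of_nonneg (by positivity), abs_of_nonneg (mul_nonneg n.cast_nonneg (hq.1 b))])
    _ = 2 * n := by
        rw [sum_add_distrib, ← mul_sum, hq.2, ← Nat.cast_sum, sum_blockCount]; ring

lemma disc_add_le (ω : ℕ → Fin N) (n m : ℕ) :
    disc k q ω (n + m) ≤ disc k q ω n + disc k q (fun x => ω (n + x)) m := by
  rw [disc, disc, disc, ← sum_add_distrib]
  refine sum_le_sum fun b _ => ?_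
  rw [blockCount_add]
  push_cast
  exact (abs_add_le _ _).trans_eq' (by ring_nf)

lemma disc_congr {ω ω' : ℕ → Fin N} {n : ℕ} (h : ∀ x < n + k, ω x = ω' x) :
    disc k q ω n = disc k q ω' n := by
  simp only [disc, blockCount_congr h]

lemma natCast_mul_dist1_freqVec (ω : ℕ → Fin N) (n : ℕ) :
    n * dist1 (freqVec k ω n) q = disc k q ω n := by
  have hfreq : ∀ b, freqVec k ω n b = blockCount k ω n b / n := fun b => by
    simp only [freqVec, freq, blockCount, List.ofFn_inj', List.length_ofFn, Fin.val_cast,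
      Sigma.mk.inj_iff, heq_eq_eq, true_and]
  rcases n.eq_zero_or_pos with rfl | hn
  · simp [disc, blockCount]
  rw [dist1, mul_sum, disc]
  refine sum_congr rfl fun b _ => ?_
  have hn' : (0 : ℝ) < n := Nat.cast_pos.2 hn
  rw [hfreq, ← abs_of_pos hn', ← abs_mul, abs_of_pos hn', mul_sub, mul_div_cancel₀ _ hn'.ne']

end Discrepancy

theorem List.exists_getElem_eq_of_isPrefix_succ {α : Type*} {W : ℕ → List α}
    (hW : ∀ i, W i <+: W (i + 1)) (hunb : ∀ x, ∃ i, x < (W i).length) :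
    ∃ ω : ℕ → α, ∀ i x (hx : x < (W i).length), ω x = (W i)[x] := by
  choose ι hι using hunb
  refine ⟨fun x => (W (ι x))[x]'(hι x), fun i x hx => ?_⟩
  rcases le_total (ι x) i with h | h
  · exact (Nat.rel_of_forall_rel_succ_of_le (· <+: ·) hW h).getElem (hι x)
  · exact ((Nat.rel_of_forall_rel_succ_of_le (· <+: ·) hW h).getElem hx).symm

section Gluing

open Finset

variable {N : ℕ} {M : Type*} {φ : M → M} {P : Fin N → Set M}

lemma mem_lang_of_prefix {v w : List (Fin N)} (hw : w ∈ Lang φ P) (h : v <+: w) :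
    v ∈ Lang φ P := by
  obtain ⟨x, hx⟩ := hw
  refine ⟨x, mem_iInter.2 fun m => ?_⟩
  have hm : (m : ℕ) < w.length := m.2.trans_le h.length_le
  simpa only [List.get_eq_getElem, h.getElem m.2] using mem_iInter.1 hx ⟨m, hm⟩

lemma mem_shiftSpace_of_getElem {ω : ℕ → Fin N} {W : ℕ → List (Fin N)}
    (hW : ∀ i, W i ∈ Lang φ P) (hunb : ∀ x, ∃ i, x < (W i).length)
    (hω : ∀ i x (hx : x < (W i).length), ω x = (W i)[x]) : ω ∈ ShiftSpace φ P := by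
  intro n
  obtain ⟨i, hi⟩ := hunb n
  have : (List.ofFn fun m : Fin n => ω m) = (W i).take n :=
    List.ext_getElem (by simp; omega) fun x h _ => by simp [hω i x (by simp at h; omega)]
  exact this ▸ mem_lang_of_prefix (hW i) (List.take_prefix _ _)

variable {j : ℕ}

noncomputable def glue (hspec : Spec φ P j) (a : Lang φ P) (b : ℕ → Lang φ P) : ℕ → Lang φ P
  | 0 => a
  | i + 1 => ⟨glue hspec a b i ++ (hspec _ (glue hspec a b i).2 _ (b i).2).choose ++ b i,
      (hspec _ (glue hspec a b i).2 _ (b i).2).choose_spec.2.2⟩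

lemma exists_glue_succ (hspec : Spec φ P j) (a : Lang φ P) (b : ℕ → Lang φ P) (i : ℕ) :
    ∃ u : List (Fin N), u.length ≤ j ∧
      (glue hspec a b (i + 1) : List (Fin N)) = glue hspec a b i ++ u ++ b i :=
  ⟨_, (hspec _ (glue hspec a b i).2 _ (b i).2).choose_spec.2.1, rfl⟩

theorem exists_mem_shiftSpace_concat (hspec : Spec φ P j) (hnil : [] ∈ Lang φ P)
    (b : ℕ → List (Fin N)) (hb : ∀ i, b i ∈ Lang φ P) (hb₀ : ∀ i, b i ≠ []) :
    ∃ ω ∈ ShiftSpace φ P, ∃ u : ℕ → List (Fin N), (∀ i, (u i).length ≤ j) ∧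
      ∀ i x (hx : x < (b i).length),
        ω (∑ l ∈ range i, ((u l).length + (b l).length) + (u i).length + x) = (b i)[x] := by
  set W : ℕ → List (Fin N) := fun i => glue hspec ⟨[], hnil⟩ (fun i => ⟨b i, hb i⟩) i
  choose u hu hWsucc using exists_glue_succ hspec ⟨[], hnil⟩ (fun i => ⟨b i, hb i⟩)
  have hlen : ∀ i, (W i).length = ∑ l ∈ range i, ((u l).length + (b l).length) := by
    intro i
    induction i with
    | zero => rfl
    | succ i ih => simp only [W, hWsucc, List.length_append, sum_range_succ] at ih ⊢; omega
  have hunb : ∀ x, ∃ i, x < (W i).length := fun x => ⟨x + 1, by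
    rw [hlen]
    calc x < ∑ _l ∈ range (x + 1), 1 := by simp
      _ ≤ _ := sum_le_sum fun l _ => by have := List.length_pos_iff.2 (hb₀ l); omega⟩
  obtain ⟨ω, hω⟩ := List.exists_getElem_eq_of_isPrefix_succ
    (fun i => by simp only [W, hWsucc, List.append_assoc]; exact List.prefix_append _ _) hunb
  refine ⟨ω, mem_shiftSpace_of_getElem (fun i => (glue _ _ _ i).2) hunb hω, u, hu, ?_⟩
  intro i x hx
  have hWi : W (i + 1) = W i ++ u i ++ b i := hWsucc i
  rw [← hlen i, hω (i + 1) _ (by simp only [hWi, List.length_append]; omega)]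
  simp only [hWi, List.append_assoc]
  rw [List.getElem_append_right (by omega)]
  simp only [add_assoc, Nat.add_sub_cancel_left]
  rw [List.getElem_append_right (by omega)]
  simp only [Nat.add_sub_cancel_left]

end Gluing

section Blocks

open Finset Asymptotics

variable {N k j : ℕ} {q : (Fin k → Fin N) → ℝ}

lemma exists_disc_le_of_mem_accPts {ω₀ : ℕ → Fin N} (hq : q ∈ AccPts (freqVec k ω₀)) (s : ℕ) :
    ∃ n, s + 1 ≤ n ∧ (s + 1) * disc k q ω₀ n ≤ n := by
  obtain ⟨n, hsn, hn⟩ := hq.2 (1 / (s + 1)) (by positivity) (s + 1)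
  refine ⟨n, hsn, ?_⟩
  rw [← natCast_mul_dist1_freqVec]
  calc ((s : ℝ) + 1) * (n * dist1 (freqVec k ω₀ n) q)
      ≤ (s + 1) * (n * (1 / (s + 1))) := by gcongr
    _ = n := by field_simp

lemma disc_block_le (hq : q ∈ Simplex _) {ω ω₀ : ℕ → Fin N} {c n s : ℕ} (hc : c ≤ j)
    (hsn : s + 1 ≤ n) (hdisc : (s + 1) * disc k q ω₀ n ≤ n)
    (h : ∀ x < n + k, ω (c + x) = ω₀ x) :
    (s + 1) * disc k q ω (c + (n + k)) ≤ (2 * (j + k) + 1) * (c + (n + k)) := by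
  have hblock : disc k q (fun x => ω (c + x)) n = disc k q ω₀ n :=
    disc_congr h
  have := disc_add_le (q := q) ω c (n + k)
  have := disc_add_le (q := q) (fun x => ω (c + x)) n k
  have := disc_le hq ω c
  have := disc_le hq (fun x => ω (c + (n + x))) k
  have hs : (s : ℝ) + 1 ≤ n := by exact_mod_cast hsn
  have hck : (c : ℝ) + k ≤ j + k := by gcongr
  nlinarith [mul_le_mul hck hs (by positivity) (by positivity)]

theorem isLittleO_disc_of_blocks (hq : q ∈ Simplex _) {ω ω₀ : ℕ → Fin N} {n σ u : ℕ → ℕ}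
    (hn : ∀ s, s + 1 ≤ n s) (hdisc : ∀ s, (s + 1) * disc k q ω₀ (n s) ≤ n s)
    (hσ : Tendsto σ atTop atTop) (hσn : ∀ᶠ i in atTop, (σ i + 1) * n (σ i) ≤ i)
    (hu : ∀ i, u i ≤ j)
    (hω : ∀ i, ∀ x < n (σ i) + k,
      ω (∑ l ∈ range i, (u l + (n (σ l) + k)) + u i + x) = ω₀ x) :
    (fun m => disc k q ω m) =o[atTop] fun m => (m : ℝ) := by
  set C : ℝ := 2 * (j + k) + 1
  have hδ : Tendsto (fun i => C / (σ i + 1)) atTop (𝓝 0) := by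
    simpa [Function.comp_def] using
      (tendsto_const_div_atTop_nhds_zero_nat C).comp ((tendsto_add_atTop_nat 1).comp hσ)
  refine (isLittleO_of_subadditive_pieces (Δ := fun a m => disc k q (fun x => ω (a + x)) m)
    (C := 2) (ℓ := fun i => u i + (n (σ i) + k)) (fun _ _ => disc_nonneg _ _)
    (fun _ _ => disc_le hq _ _) (fun a m m' => by simpa only [add_assoc] using disc_add_le _ m m')
    (fun i => by have := hn (σ i); omega) ?_ ?_).congr_left (by simp)
  · refine isLittleO_of_norm_le_mul hδ (Eventually.of_forall fun i => ?_)
    rw [Real.norm_of_nonneg (disc_nonneg _ _), Real.norm_natCast, div_mul_eq_mul_div,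
      le_div_iff₀ (by positivity), mul_comm]
    push_cast
    exact disc_block_le hq (hu i) (hn (σ i)) (hdisc (σ i))
      (ω := fun x => ω (∑ l ∈ range i, (u l + (n (σ l) + k)) + x))
      (fun x hx => by simpa only [add_assoc] using hω i x hx)
  · refine isLittleO_of_norm_le_mul hδ (hσn.mono fun i hi => ?_)
    have ht : i ≤ ∑ l ∈ range i, (u l + (n (σ l) + k)) :=
      calc i = ∑ _l ∈ range i, 1 := by simp
        _ ≤ _ := sum_le_sum fun l _ => by have := hn (σ l); omega
    have hℓ : (σ i + 1) * (u i + (n (σ i) + k)) ≤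
        (2 * (j + k) + 1) * ∑ l ∈ range i, (u l + (n (σ l) + k)) := by
      have := hn (σ i)
      have hk : (σ i + 1) * (u i + k) ≤ (σ i + 1) * n (σ i) * (j + k) := by
        rw [mul_assoc]; gcongr; nlinarith [hu i]
      nlinarith
    rw [Real.norm_natCast, Real.norm_natCast, div_mul_eq_mul_div, le_div_iff₀ (by positivity),
      mul_comm]
    simp only [C]
    exact_mod_cast hℓ

end Blocks

theorem exists_generic_word_general
    {N : ℕ}
    {M : Type*}
    (φ : M → M) (P : Fin N → Set M)
    (j : ℕ) (hspec : Spec φ P j)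
    (k : ℕ)
    (q : (Fin k → Fin N) → ℝ) (hq : q ∈ SK φ P k) :
    ∃ ω ∈ ShiftSpace φ P,
      Tendsto (fun n => dist1 (freqVec k ω n) q) atTop (nhds 0) := by
  obtain ⟨ω₀, hω₀, hacc⟩ : ∃ ω₀ ∈ ShiftSpace φ P, q ∈ AccPts (freqVec k ω₀) := by
    simpa [SK] using hq
  choose n hn hdisc using exists_disc_le_of_mem_accPts hacc
  -- Piece `i` reuses the prefix of `ω₀` of length `n (σ i) + k`; `σ i → ∞`, but slowly enough
  -- that each piece is short compared to the word before it.
  set σ : ℕ → ℕ := fun i => Nat.findGreatest (fun s => (s + 1) * n s ≤ i) i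
  have hσn : ∀ᶠ i in atTop, (σ i + 1) * n (σ i) ≤ i :=
    (eventually_ge_atTop (n 0)).mono fun i hi =>
      Nat.findGreatest_spec (P := fun s => (s + 1) * n s ≤ i) (Nat.zero_le i) (by simpa using hi)
  obtain ⟨ω, hω, u, hu, hωb⟩ := exists_mem_shiftSpace_concat hspec (by simpa using hω₀ 0)
    (fun i => List.ofFn fun m : Fin (n (σ i) + k) => ω₀ m) (fun i => hω₀ _)
    (fun i => by have := hn (σ i); simp only [ne_eq, List.ofFn_eq_nil_iff]; omega)
  refine ⟨ω, hω, ?_⟩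
  have hdiscω := isLittleO_disc_of_blocks hacc.1 hn hdisc
    (tendsto_findGreatest_atTop fun s => eventually_ge_atTop ((s + 1) * n s)) hσn
    (ω := ω) (σ := σ) (u := fun i => (u i).length) hu (fun i x hx => by
      simpa using (hωb i x (by simpa using hx)).trans (List.getElem_ofFn ..))
  refine hdiscω.tendsto_div_nhds_zero.congr' ((eventually_ge_atTop 1).mono fun m hm => ?_)
  rw [← natCast_mul_dist1_freqVec, mul_div_cancel_left₀ _ (by positivity)]

/-- for every `q ∈ S_k` there is an infinite word `ω ∈ X` with
`lim_{n→∞} P_k(ω,n) = q` in `(Δ_k, ‖·‖₁)`. -/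
theorem exists_generic_word
    {N : ℕ}
    {M : Type*} [MetricSpace M] [CompactSpace M]
    (φ : M → M) (P : Fin N → Set M)
    (hNSP : IsNSP φ P)
    (j : ℕ) (hspec : Spec φ P j)
    (k : ℕ) (hk : 1 ≤ k)
    (q : (Fin k → Fin N) → ℝ) (hq : q ∈ SK φ P k) :
    ∃ ω ∈ ShiftSpace φ P,
      Tendsto (fun n => dist1 (freqVec k ω n) q) atTop (nhds 0) :=
  exists_generic_word_general φ P j hspec k q hq

end Paper
end

section
/- Let 𝒫 be a number system partition for (M,φ) with language ℒ, fix k ∈ ℕ and r ≥ 0, and let ω ∈ X. If the sequence (P_k^{(r)}(ω,n))_{n≥1} has property P, then the sequence (P_k^{(r+1)}(ω,n))_{n≥1} also has property P. -/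
open Filter Topology Set

namespace Paper

/-! Averaging preserves property `P`. Given `m` and `ε`, property `P` of the sequence for the
tower height `m + 1` and tolerance `ε / 2` yields `j₀`; take `j = 2 ^ j₀`. As
`tow m (2 ^ 2 ^ j₀) = tow (m + 1) (2 ^ j₀)`, for `2 ^ j₀ < n < tow m (2 ^ j)` all terms after the
`j₀`-th of the `n`-th Cesàro average are `ε / 2`-close to the point, while the first `j₀` terms,
each at distance at most `N ^ k`, weigh at most `j₀ N ^ k / 2 ^ j₀ < ε / 2`. -/

/-- For `n = 0` this is the zero vector. -/
noncomputable def cesaro {α : Type*} (f : ℕ → α → ℝ) (n : ℕ) : α → ℝ :=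
  fun b => (∑ j ∈ Finset.Icc 1 n, f j b) / n

theorem cfreqVec_succ {N : ℕ} (r k : ℕ) (ω : ℕ → Fin N) :
    cfreqVec (r + 1) k ω = cesaro (cfreqVec r k ω) :=
  rfl

theorem tow_succ_apply (m x : ℕ) : tow (m + 1) x = tow m (2 ^ x) :=
  Function.iterate_succ_apply _ _ _

section Bounds

variable {α : Type*}

theorem cesaro_mem_Icc {f : ℕ → α → ℝ} (hf : ∀ j b, f j b ∈ Icc (0 : ℝ) 1) (n : ℕ) (b : α) :
    cesaro f n b ∈ Icc (0 : ℝ) 1 := by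
  refine ⟨div_nonneg (Finset.sum_nonneg fun j _ => (hf j b).1) n.cast_nonneg,
    div_le_one_of_le₀ ?_ n.cast_nonneg⟩
  calc ∑ j ∈ Finset.Icc 1 n, f j b ≤ (Finset.Icc 1 n).card • (1 : ℝ) :=
        Finset.sum_le_card_nsmul _ _ _ fun j _ => (hf j b).2
    _ = n := by simp

theorem freq_mem_Icc {N : ℕ} (ω : ℕ → Fin N) (b : List (Fin N)) (n : ℕ) :
    freq ω b n ∈ Icc (0 : ℝ) 1 := by
  refine ⟨by unfold freq; positivity, div_le_one_of_le₀ ?_ n.cast_nonneg⟩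
  exact_mod_cast (Finset.card_filter_le _ _).trans (Finset.card_range n).le

theorem cfreqVec_mem_Icc {N : ℕ} (r k : ℕ) (ω : ℕ → Fin N) :
    ∀ n b, cfreqVec r k ω n b ∈ Icc (0 : ℝ) 1 := by
  induction r with
  | zero => exact fun n b => freq_mem_Icc ω _ n
  | succ r ih => rw [cfreqVec_succ]; exact cesaro_mem_Icc ih

theorem Simplex.mem_Icc [Fintype α] {p : α → ℝ} (hp : p ∈ Simplex α) (b : α) :
    p b ∈ Icc (0 : ℝ) 1 :=
  ⟨hp.1 b, hp.2 ▸ Finset.single_le_sum (fun c _ => hp.1 c) (Finset.mem_univ b)⟩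

theorem dist1_le_card [Fintype α] {f p : α → ℝ} (hf : ∀ b, f b ∈ Icc (0 : ℝ) 1)
    (hp : ∀ b, p b ∈ Icc (0 : ℝ) 1) : dist1 f p ≤ Fintype.card α := by
  calc dist1 f p ≤ (Finset.univ : Finset α).card • (1 : ℝ) :=
        Finset.sum_le_card_nsmul _ _ _ fun b _ =>
          abs_sub_le_of_nonneg_of_le (hf b).1 (hf b).2 (hp b).1 (hp b).2
    _ = Fintype.card α := by simp

theorem mem_simplex_of_mem_DD {N : ℕ} {M : Type*}
    {φ : M → M} {P : Fin N → Set M} {k : ℕ} {p : (Fin k → Fin N) → ℝ} (hp : p ∈ DD φ P k) :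
    p ∈ Simplex (Fin k → Fin N) := by
  obtain ⟨_, _, hacc⟩ := Set.mem_iUnion₂.1 hp.1
  exact hacc.1

end Bounds

section Cesaro

variable {α : Type*} [Fintype α]

theorem dist1_cesaro_le {f : ℕ → α → ℝ} (q : α → ℝ) {n : ℕ} (hn : 0 < n) :
    dist1 (cesaro f n) q ≤ (∑ j ∈ Finset.Icc 1 n, dist1 (f j) q) / n := by
  have hn' : (0 : ℝ) < n := Nat.cast_pos.2 hn
  have hcoord : ∀ b, |cesaro f n b - q b| ≤ (∑ j ∈ Finset.Icc 1 n, |f j b - q b|) / n := by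
    intro b
    have hcard : ((Finset.Icc 1 n).card : ℝ) = n := by simp
    have hsub : cesaro f n b - q b = (∑ j ∈ Finset.Icc 1 n, (f j b - q b)) / n := by
      rw [Finset.sum_sub_distrib, Finset.sum_const, nsmul_eq_mul, hcard, sub_div,
        mul_div_cancel_left₀ _ hn'.ne']
      rfl
    rw [hsub, abs_div, abs_of_pos hn']
    gcongr
    exact Finset.abs_sum_le_sum_abs _ _
  calc dist1 (cesaro f n) q
      ≤ ∑ b, (∑ j ∈ Finset.Icc 1 n, |f j b - q b|) / n := Finset.sum_le_sum fun b _ => hcoord b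
    _ = (∑ j ∈ Finset.Icc 1 n, dist1 (f j) q) / n := by
      rw [← Finset.sum_div, Finset.sum_comm]
      rfl

theorem dist1_cesaro_le_of_le {f : ℕ → α → ℝ} {q : α → ℝ} {C δ : ℝ} {j₀ n : ℕ}
    (hC : ∀ j, dist1 (f j) q ≤ C) (hδ : ∀ j, j₀ < j → j ≤ n → dist1 (f j) q ≤ δ)
    (hδ₀ : 0 ≤ δ) (hj₀ : j₀ ≤ n) (hn : 0 < n) :
    dist1 (cesaro f n) q ≤ j₀ * C / n + δ := by
  have hhead : ∑ j ∈ Finset.Ioc 0 j₀, dist1 (f j) q ≤ j₀ * C := by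
    calc ∑ j ∈ Finset.Ioc 0 j₀, dist1 (f j) q ≤ (Finset.Ioc 0 j₀).card • C :=
          Finset.sum_le_card_nsmul _ _ _ fun j _ => hC j
      _ = j₀ * C := by simp
  have htail : ∑ j ∈ Finset.Ioc j₀ n, dist1 (f j) q ≤ n * δ := by
    calc ∑ j ∈ Finset.Ioc j₀ n, dist1 (f j) q ≤ (Finset.Ioc j₀ n).card • δ :=
          Finset.sum_le_card_nsmul _ _ _ fun j hj =>
            hδ j (Finset.mem_Ioc.1 hj).1 (Finset.mem_Ioc.1 hj).2
      _ ≤ n * δ := by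
        rw [Nat.card_Ioc, nsmul_eq_mul]
        gcongr
        exact_mod_cast Nat.sub_le n j₀
  calc dist1 (cesaro f n) q ≤ (∑ j ∈ Finset.Icc 1 n, dist1 (f j) q) / n := dist1_cesaro_le q hn
    _ ≤ (j₀ * C + n * δ) / n := by
      rw [show Finset.Icc 1 n = Finset.Ioc 0 n from Finset.Icc_add_one_left_eq_Ioc 0 n,
        ← Finset.sum_Ioc_consecutive _ j₀.zero_le hj₀]
      gcongr
    _ = j₀ * C / n + δ := by field_simp

/-- `HasPropP φ P f` unfolds to `∀ p ∈ DD φ P k, HasPropPAt f p`. -/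
def HasPropPAt (f : ℕ → α → ℝ) (q : α → ℝ) : Prop :=
  ∀ m : ℕ, 1 ≤ m → ∀ i : ℕ, ∀ ε : ℝ, 0 < ε →
    ∃ j : ℕ, i ≤ j ∧ (j : ℝ) / 2 ^ j < ε ∧
      ∀ n : ℕ, j < n → n < tow m (2 ^ j) → dist1 (f n) q < ε

theorem HasPropPAt.cesaro {f : ℕ → α → ℝ} {q : α → ℝ} {C : ℝ} (hf : HasPropPAt f q)
    (hC : ∀ n, dist1 (f n) q ≤ C) : HasPropPAt (cesaro f) q := by
  intro m _ i ε hε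
  have hlim : Tendsto (fun x : ℕ => (x : ℝ) / 2 ^ x) atTop (𝓝 0) := by
    simpa using tendsto_pow_const_div_const_pow_of_one_lt 1 one_lt_two
  have hlimC : Tendsto (fun x : ℕ => (x : ℝ) / 2 ^ x * C) atTop (𝓝 0) := by
    simpa using hlim.mul_const C
  obtain ⟨K, hK⟩ := eventually_atTop.1 <|
    (hlim.eventually (gt_mem_nhds hε)).and (hlimC.eventually (gt_mem_nhds (half_pos hε)))
  obtain ⟨j₀, hj₀, -, hclose⟩ := hf (m + 1) (by omega) (max i K) (ε / 2) (half_pos hε)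
  have hj₀2 : j₀ < 2 ^ j₀ := Nat.lt_two_pow_self
  refine ⟨2 ^ j₀, by omega, (hK _ (by omega)).1, fun n hn hnT => ?_⟩
  have hC₀ : 0 ≤ C := (Finset.sum_nonneg fun b _ => abs_nonneg _).trans (hC 0)
  have hhead : (j₀ : ℝ) * C / n ≤ j₀ / 2 ^ j₀ * C := by
    rw [div_mul_eq_mul_div]
    gcongr
    exact_mod_cast hn.le
  have hdist := dist1_cesaro_le_of_le hC (δ := ε / 2)
    (fun j hj hjn => (hclose j hj (by rw [tow_succ_apply]; omega)).le) (half_pos hε).le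
    (by omega) (by omega : 0 < n)
  linarith [(hK j₀ (by omega)).2]

end Cesaro

theorem propP_cesaro_stable_general
    {N : ℕ}
    {M : Type*}
    (φ : M → M) (P : Fin N → Set M)
    (k : ℕ) (r : ℕ)
    (ω : ℕ → Fin N)
    (hP : HasPropP φ P (cfreqVec r k ω)) :
    HasPropP φ P (cfreqVec (r + 1) k ω) := by
  rw [cfreqVec_succ]
  intro p hp
  exact HasPropPAt.cesaro (hP p hp) fun n =>
    dist1_le_card (cfreqVec_mem_Icc r k ω n) (Simplex.mem_Icc (mem_simplex_of_mem_DD hp))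

/-- if `(P_k^{(r)}(ω,n))_n` has property `P`, then so does
`(P_k^{(r+1)}(ω,n))_n`. -/
theorem propP_cesaro_stable
    {N : ℕ}
    {M : Type*} [MetricSpace M] [CompactSpace M]
    (φ : M → M) (P : Fin N → Set M)
    (hNSP : IsNSP φ P)
    (k : ℕ) (hk : 1 ≤ k) (r : ℕ)
    (ω : ℕ → Fin N) (hω : ω ∈ ShiftSpace φ P)
    (hP : HasPropP φ P (cfreqVec r k ω)) :
    HasPropP φ P (cfreqVec (r + 1) k ω) :=
  propP_cesaro_stable_general φ P k r ω hP

end Paper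
end

section
/- Let N ≥ 2 be an integer. The set of essentially non-normal numbers in base N — that is, the set of x ∈ [0,1) such that for every digit i ∈ {0,…,N−1} the limit lim_{n→∞} Π(x, i, n) does not exist — is residual in [0,1). -/
/-! The open interval `cylinder s n` of length `N⁻ⁿ` cut out by a digit prefix `s` pins down the
first `n` digits of all its points, and such intervals around any point are arbitrarily short.
So for a digit `c`, every open set contains a cylinder whose prefix is extended by a long run of
`c`'s, on which the frequency of `c` at some late time exceeds `3/4`: the points whose
`c`-frequency is frequently above `3/4` form a residual set. On the intersection over all digits,
the frequency of `i` is frequently above `3/4` and, through a second digit `j ≠ i`, frequently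
below `1/4`, so it has no limit. -/

open Filter Topology Set

namespace BaseN

/-- The ℓ¹ distance between two finitely-indexed real vectors. -/
noncomputable def dist1 {α : Type*} [Fintype α] (p q : α → ℝ) : ℝ :=
  ∑ b, |p b - q b|

/-- The simplex of probability vectors indexed by `α`. -/
def Simplex (α : Type*) [Fintype α] : Set (α → ℝ) :=
  {p | (∀ b, 0 ≤ p b) ∧ ∑ b, p b = 1}

/-- The set of accumulation points, in the simplex with the ℓ¹ norm, of a sequence
of vectors. -/
def AccPts {α : Type*} [Fintype α] (f : ℕ → (α → ℝ)) : Set (α → ℝ) :=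
  {p | p ∈ Simplex α ∧ ∀ ε : ℝ, 0 < ε → ∀ n₀ : ℕ, ∃ n, n₀ ≤ n ∧ dist1 (f n) p < ε}

/-- `d : ℝ → ℕ → Fin N` assigns to each `x ∈ [0,1)` the digit sequence
`d x 0, d x 1, …` (so `d x h = d_{h+1}(x)`) of its unique non-terminating base-`N`
expansion: the digits sum to `x`, and for `x ≠ 0` the digit sequence is not
eventually zero. -/
def IsNonTerminatingDigits {N : ℕ} (d : ℝ → ℕ → Fin N) : Prop :=
  ∀ x ∈ Set.Ico (0 : ℝ) 1,
    HasSum (fun h : ℕ => (d x h : ℝ) / (N : ℝ) ^ (h + 1)) x ∧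
    (x ≠ 0 → ∀ H : ℕ, ∃ h, H ≤ h ∧ (d x h : ℕ) ≠ 0)

/-- `bfreq d x b n` is the frequency `Π(x,b,n)` of the block `b` among the first
`n` digits of `x`. -/
noncomputable def bfreq {N : ℕ} (d : ℝ → ℕ → Fin N) (x : ℝ) (b : List (Fin N))
    (n : ℕ) : ℝ :=
  (((Finset.range n).filter fun i =>
      (List.ofFn fun m : Fin b.length => d x (i + (m : ℕ))) = b).card : ℝ) / n

/-- `Π_k(x,n)`: the vector of frequencies of all blocks of length `k` among the
first `n` digits of `x`. -/
noncomputable def bfreqVec {N : ℕ} (d : ℝ → ℕ → Fin N) (x : ℝ) (k n : ℕ) :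
    (Fin k → Fin N) → ℝ :=
  fun b => bfreq d x (List.ofFn b) n

section Cylinders

variable {N : ℕ} {d : ℝ → ℕ → Fin N}

noncomputable def prefixValue (s : ℕ → Fin N) (n : ℕ) : ℝ :=
  ∑ h ∈ Finset.range n, (s h : ℝ) / (N : ℝ) ^ (h + 1)

/-- Taken open, so that the first `n` digits are determined on it whichever expansion the
endpoints have. -/
def cylinder (s : ℕ → Fin N) (n : ℕ) : Set ℝ :=
  Ioo (prefixValue s n) (prefixValue s n + ((N : ℝ) ^ n)⁻¹)

lemma digit_div_pow_le_inv_pow_sub (c : Fin N) (h : ℕ) :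
    (c : ℝ) / (N : ℝ) ^ (h + 1) ≤ ((N : ℝ) ^ h)⁻¹ - ((N : ℝ) ^ (h + 1))⁻¹ := by
  have hN : (0 : ℝ) < N := by exact_mod_cast c.pos
  have hc : (c : ℝ) + 1 ≤ N := by exact_mod_cast c.isLt
  have hdiff : ((N : ℝ) ^ h)⁻¹ - ((N : ℝ) ^ (h + 1))⁻¹ = ((N : ℝ) - 1) / (N : ℝ) ^ (h + 1) := by
    field_simp
    ring
  rw [hdiff]
  gcongr
  linarith

lemma prefixValue_succ (s : ℕ → Fin N) (n : ℕ) :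
    prefixValue s (n + 1) = prefixValue s n + (s n : ℝ) / (N : ℝ) ^ (n + 1) :=
  Finset.sum_range_succ _ _

lemma prefixValue_congr {s t : ℕ → Fin N} {n : ℕ} (hst : ∀ h < n, s h = t h) :
    prefixValue s n = prefixValue t n :=
  Finset.sum_congr rfl fun h hh => by rw [hst h (Finset.mem_range.mp hh)]

lemma prefixValue_mono (s : ℕ → Fin N) : Monotone (prefixValue s) := fun _ _ hnk =>
  Finset.sum_le_sum_of_subset_of_nonneg (Finset.range_mono hnk) fun _ _ _ => by positivity

lemma antitone_prefixValue_add_inv_pow (s : ℕ → Fin N) :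
    Antitone fun n => prefixValue s n + ((N : ℝ) ^ n)⁻¹ :=
  antitone_nat_of_succ_le fun n => by
    have := digit_div_pow_le_inv_pow_sub (s n) n
    rw [prefixValue_succ]
    linarith

lemma cylinder_antitone (s : ℕ → Fin N) : Antitone (cylinder s) := fun _ _ hnk =>
  Ioo_subset_Ioo (prefixValue_mono s hnk) (antitone_prefixValue_add_inv_pow s hnk)

lemma cylinder_subset_Ioo (s : ℕ → Fin N) (n : ℕ) : cylinder s n ⊆ Ioo 0 1 := by
  simpa [cylinder, prefixValue] using cylinder_antitone s (Nat.zero_le n)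

lemma cylinder_nonempty (s : ℕ → Fin N) (n : ℕ) : (cylinder s n).Nonempty := by
  have : (0 : ℝ) < N := by exact_mod_cast (s 0).pos
  exact nonempty_Ioo.mpr (lt_add_of_pos_right _ (by positivity))

lemma eq_of_abs_prefixValue_sub_lt {s t : ℕ → Fin N} {n : ℕ}
    (hst : |prefixValue s n - prefixValue t n| < ((N : ℝ) ^ n)⁻¹) : ∀ h < n, s h = t h := by
  induction n with
  | zero => simp
  | succ n ih =>
    have hN : (0 : ℝ) < N := by exact_mod_cast (s 0).pos
    have hs := digit_div_pow_le_inv_pow_sub (s n) n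
    have ht := digit_div_pow_le_inv_pow_sub (t n) n
    have hs₀ : 0 ≤ (s n : ℝ) / (N : ℝ) ^ (n + 1) := by positivity
    have ht₀ : 0 ≤ (t n : ℝ) / (N : ℝ) ^ (n + 1) := by positivity
    rw [prefixValue_succ, prefixValue_succ] at hst
    have hprefix : ∀ h < n, s h = t h :=
      ih (abs_sub_lt_iff.mpr (by constructor <;> linarith [abs_sub_lt_iff.mp hst]))
    have hlast : s n = t n := by
      have hpow : (0 : ℝ) < (N : ℝ) ^ (n + 1) := pow_pos hN _
      rw [prefixValue_congr hprefix, add_sub_add_left_eq_sub, ← sub_div, abs_div,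
        abs_of_pos hpow, div_lt_iff₀ hpow, inv_mul_cancel₀ hpow.ne', abs_sub_lt_iff] at hst
      have h₁ : (s n : ℕ) < t n + 1 := by exact_mod_cast (by linarith : (s n : ℝ) < t n + 1)
      have h₂ : (t n : ℕ) < s n + 1 := by exact_mod_cast (by linarith : (t n : ℝ) < s n + 1)
      exact Fin.ext (by omega)
    intro h hh
    rcases Nat.lt_succ_iff_lt_or_eq.mp hh with hh | rfl
    exacts [hprefix h hh, hlast]

lemma mem_Icc_prefixValue (hd : IsNonTerminatingDigits d) {x : ℝ} (hx : x ∈ Ico 0 1) (n : ℕ) :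
    x ∈ Icc (prefixValue (d x) n) (prefixValue (d x) n + ((N : ℝ) ^ n)⁻¹) :=
  isClosed_Icc.mem_of_tendsto (hd x hx).1.tendsto_sum_nat <|
    (eventually_ge_atTop n).mono fun k hk =>
      ⟨prefixValue_mono _ hk,
        (le_add_of_nonneg_right (by positivity)).trans (antitone_prefixValue_add_inv_pow _ hk)⟩

lemma digits_eq_of_mem_cylinder (hd : IsNonTerminatingDigits d) {x : ℝ} (hx : x ∈ Ico 0 1)
    {s : ℕ → Fin N} {n : ℕ} (hxs : x ∈ cylinder s n) : ∀ h < n, d x h = s h := by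
  have := mem_Icc_prefixValue hd hx n
  exact eq_of_abs_prefixValue_sub_lt <| abs_sub_lt_iff.mpr <| by
    constructor <;> linarith [hxs.1, hxs.2, this.1, this.2]

lemma cylinder_subset_ball (hd : IsNonTerminatingDigits d) {z : ℝ} (hz : z ∈ Ico 0 1) {ε : ℝ}
    {s : ℕ → Fin N} {n₀ n : ℕ} (hε : ((N : ℝ) ^ n₀)⁻¹ < ε) (hs : ∀ h < n₀, s h = d z h)
    (hn : n₀ ≤ n) : cylinder s n ⊆ Metric.ball z ε := by
  intro q hq
  have hq₀ := cylinder_antitone s hn hq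
  have hz₀ := mem_Icc_prefixValue hd hz n₀
  rw [cylinder, prefixValue_congr hs] at hq₀
  rw [Metric.mem_ball, Real.dist_eq, abs_sub_lt_iff]
  constructor <;> linarith [hq₀.1, hq₀.2, hz₀.1, hz₀.2]

end Cylinders

section Frequencies

variable {N : ℕ}

lemma bfreq_singleton (d : ℝ → ℕ → Fin N) (x : ℝ) (i : Fin N) (n : ℕ) :
    bfreq d x [i] n = (((Finset.range n).filter fun h => d x h = i).card : ℝ) / n := by
  simp [bfreq, List.ofFn_succ]

lemma bfreq_singleton_add_le_one {i j : Fin N} (hij : i ≠ j) (d : ℝ → ℕ → Fin N) (x : ℝ)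
    (n : ℕ) : bfreq d x [i] n + bfreq d x [j] n ≤ 1 := by
  classical
  have hcard : ((Finset.range n).filter fun h => d x h = i).card
      + ((Finset.range n).filter fun h => d x h = j).card ≤ n := by
    rw [← Finset.card_union_of_disjoint (Finset.disjoint_filter_filter' _ _ ?_)]
    · exact (Finset.card_le_card (Finset.union_subset (Finset.filter_subset _ _)
        (Finset.filter_subset _ _))).trans (Finset.card_range n).le
    · intro p hpi hpj h hp
      exact hij ((hpi h hp).symm.trans (hpj h hp))
  rw [bfreq_singleton, bfreq_singleton, ← add_div]
  exact div_le_one_of_le₀ (by exact_mod_cast hcard) n.cast_nonneg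

lemma one_sub_div_le_bfreq {d : ℝ → ℕ → Fin N} {x : ℝ} {c : Fin N} {n₀ n : ℕ} (hn : 0 < n)
    (hc : ∀ h ∈ Finset.Ico n₀ n, d x h = c) : 1 - n₀ / n ≤ bfreq d x [c] n := by
  classical
  have hcard : n - n₀ ≤ ((Finset.range n).filter fun h => d x h = c).card := by
    rw [← Nat.card_Ico]
    exact Finset.card_le_card fun h hh => Finset.mem_filter.mpr
      ⟨Finset.mem_range.mpr (Finset.mem_Ico.mp hh).2, hc h hh⟩
  have hnR : (0 : ℝ) < n := by exact_mod_cast hn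
  have hcardR : (n : ℝ) ≤ ((Finset.range n).filter fun h => d x h = c).card + n₀ := by
    exact_mod_cast (by omega : n ≤ ((Finset.range n).filter fun h => d x h = c).card + n₀)
  rw [bfreq_singleton, one_sub_div hnR.ne', div_le_div_iff_of_pos_right hnR]
  linarith

end Frequencies

section Residual

variable {N : ℕ} {d : ℝ → ℕ → Fin N}

lemma dense_interior_exists_bfreq_gt (hN : 1 < N) (hd : IsNonTerminatingDigits d) (c : Fin N)
    {θ : ℝ} (hθ : θ < 1) (m : ℕ) :
    Dense (interior {y : Ico (0 : ℝ) 1 | ∃ n ≥ m, θ < bfreq d y [c] n}) := by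
  refine dense_iff_inter_open.mpr fun U hU ⟨z, hzU⟩ => ?_
  obtain ⟨ε, hε, hball⟩ := Metric.isOpen_iff.mp hU z hzU
  obtain ⟨n₀, hn₀⟩ : ∃ n₀ : ℕ, ((N : ℝ) ^ n₀)⁻¹ < ε := by
    simpa only [inv_pow] using
      exists_pow_lt_of_lt_one hε (inv_lt_one_of_one_lt₀ (by exact_mod_cast hN))
  obtain ⟨n, hn, hθn⟩ : ∃ n : ℕ, m + n₀ < n ∧ θ < 1 - n₀ / n :=
    ((eventually_gt_atTop _).and <|
      (tendsto_const_nhds.sub (tendsto_const_div_atTop_nhds_zero_nat (n₀ : ℝ))).eventually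
        (lt_mem_nhds (by simpa using hθ))).exists
  let s : ℕ → Fin N := fun h => if h < n₀ then d z h else c
  let V : Set (Ico (0 : ℝ) 1) := Subtype.val ⁻¹' cylinder s n
  have hVU : V ⊆ U := fun y hy => hball <| by
    rw [Metric.mem_ball, Subtype.dist_eq]
    exact cylinder_subset_ball hd z.2 hn₀ (fun h hh => if_pos hh) (by omega) hy
  have hVfreq : V ⊆ {y | ∃ n ≥ m, θ < bfreq d y [c] n} := fun y hy =>
    ⟨n, by omega, hθn.trans_le <| one_sub_div_le_bfreq (by omega) fun h hh => by
      obtain ⟨hh₀, hhn⟩ := Finset.mem_Ico.mp hh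
      rw [digits_eq_of_mem_cylinder hd y.2 hy h hhn]
      exact if_neg (not_lt.mpr hh₀)⟩
  obtain ⟨p, hp⟩ := cylinder_nonempty s n
  exact ⟨⟨p, Ioo_subset_Ico_self (cylinder_subset_Ioo s n hp)⟩, hVU hp,
    interior_maximal hVfreq (isOpen_Ioo.preimage continuous_subtype_val) hp⟩

lemma frequently_bfreq_gt_mem_residual (hN : 1 < N) (hd : IsNonTerminatingDigits d) (c : Fin N)
    {θ : ℝ} (hθ : θ < 1) :
    {y : Ico (0 : ℝ) 1 | ∃ᶠ n in atTop, θ < bfreq d y [c] n} ∈ residual (Ico (0 : ℝ) 1) := by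
  have hres : ∀ m, interior {y : Ico (0 : ℝ) 1 | ∃ n ≥ m, θ < bfreq d y [c] n}
      ∈ residual (Ico (0 : ℝ) 1) := fun m =>
    residual_of_dense_open isOpen_interior (dense_interior_exists_bfreq_gt hN hd c hθ m)
  filter_upwards [countable_iInter_mem.mpr hres] with y hy
  exact frequently_atTop.mpr fun m => by simpa using interior_subset (mem_iInter.mp hy m)

end Residual

lemma not_tendsto_of_frequently_lt_of_frequently_gt {α β : Type*} [TopologicalSpace α]
    [Preorder α] [OrderClosedTopology α] {f : β → α} {l : Filter β} {a b : α} (hab : a < b)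
    (hlo : ∃ᶠ x in l, f x < a) (hhi : ∃ᶠ x in l, b < f x) (L : α) : ¬Tendsto f l (𝓝 L) :=
  fun hL => (le_of_tendsto_of_frequently hL (hlo.mono fun _ => le_of_lt)).trans_lt hab
    |>.not_ge (ge_of_tendsto_of_frequently hL (hhi.mono fun _ => le_of_lt))

/-- the set of essentially non-normal numbers in base `N` — the
`x ∈ [0,1)` such that for every digit `i` the limit `lim_n Π(x,i,n)` does not
exist — is residual in `[0,1)`. -/
theorem essentially_nonnormal_residual_baseN
    {N : ℕ} (hN : 2 ≤ N)
    (d : ℝ → ℕ → Fin N) (hd : IsNonTerminatingDigits d) :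
    {y : ↥(Set.Ico (0 : ℝ) 1) | ∀ i : Fin N,
        ¬ ∃ L : ℝ, Tendsto (fun n => bfreq d (y : ℝ) [i] n) atTop (nhds L)}
      ∈ residual ↥(Set.Ico (0 : ℝ) 1) := by
  have : Nontrivial (Fin N) := Fin.nontrivial_iff_two_le.mpr hN
  have hfreq : ∀ c : Fin N, {y : Ico (0 : ℝ) 1 | ∃ᶠ n in atTop, 3 / 4 < bfreq d y [c] n}
      ∈ residual (Ico (0 : ℝ) 1) :=
    fun c => frequently_bfreq_gt_mem_residual hN hd c (by norm_num)
  filter_upwards [countable_iInter_mem.mpr hfreq] with y hy i ⟨L, hL⟩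
  obtain ⟨j, hji⟩ := exists_ne i
  have hlo : ∃ᶠ n in atTop, bfreq d y [i] n < 1 / 4 := (mem_iInter.mp hy j).mono fun n hn => by
    linarith [bfreq_singleton_add_le_one hji.symm d y n]
  exact not_tendsto_of_frequently_lt_of_frequently_gt (by norm_num) hlo (mem_iInter.mp hy i) L hL

end BaseN
end
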